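/- arXiv:2010.09071 — 4 statements merged into one kernel-verified Lean document; each statement's English description precedes it below -/
import Mathlib

section
/- Let γ ∈ (0,1), i.e. lim_{n→∞} ℱ(n+1)/ℱ(n) = γ with 0 < γ < 1. Then, with m_n and p_n defined from any admissible extension G, for every fixed x ∈ ℤ one has P(X_{(n)} ≤ m_n + x) − p_n^{γ^x} → 0 as n → ∞. -/
/-! By independence, `P(max_{i<n} Xᵢ ≤ k) = (1 - ℱ(k))ⁿ`, and `(1 - u)ⁿ` is within `n u²` of
`exp (-n u)`, so it suffices that `n ℱ(mₙ + z) - θₙ γ^z → 0` with `θₙ` bounded. Since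
`G(xₙ) = 1/n`, `θₙ = n ℱ(mₙ)`, hence `n ℱ(mₙ + z) = θₙ · ℱ(mₙ + z)/ℱ(mₙ)` and the ratio tends to
`γ^z`. Boundedness comes from rounding: `xₙ ≤ mₙ + 1`, so `θₙ ≤ ℱ(mₙ)/ℱ(mₙ + 1) → γ⁻¹`. -/

open MeasureTheory ProbabilityTheory Filter

/-- An admissible extension of the tail `ℱ : ℕ → ℝ` of a discrete distribution:
a positive, continuous, strictly decreasing, log-convex function on `[0,∞)`
tending to `0` at `+∞` and agreeing with `ℱ` on the integers. -/
structure AdmissibleExt (Ftail : ℕ → ℝ) : Type where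
  G : ℝ → ℝ
  pos : ∀ x ∈ Set.Ici (0 : ℝ), 0 < G x
  cont : ContinuousOn G (Set.Ici 0)
  anti : StrictAntiOn G (Set.Ici 0)
  logConvex : ConvexOn ℝ (Set.Ici 0) fun x => Real.log (G x)
  tendsto_zero : Tendsto G atTop (nhds 0)
  agrees : ∀ n : ℕ, G n = Ftail n

open Topology

namespace ProbabilityTheory

theorem iIndepFun.measure_biInter_preimage_eq_pow {Ω ι α : Type*} [MeasurableSpace Ω]
    [MeasurableSpace α] {μ : Measure Ω} {X : ι → Ω → α} (hmeas : ∀ i, Measurable (X i))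
    (hindep : iIndepFun X μ) {i₀ : ι} (hident : ∀ i, μ.map (X i) = μ.map (X i₀))
    (S : Finset ι) {s : Set α} (hs : MeasurableSet s) :
    μ (⋂ i ∈ S, X i ⁻¹' s) = μ (X i₀ ⁻¹' s) ^ S.card := by
  have hsame : ∀ i, μ (X i ⁻¹' s) = μ (X i₀ ⁻¹' s) := fun i => by
    rw [← Measure.map_apply (hmeas i) hs, hident i, Measure.map_apply (hmeas i₀) hs]
  rw [hindep.meas_biInter fun i _ => ⟨s, hs, rfl⟩, Finset.prod_congr rfl fun i _ => hsame i,
    Finset.prod_const]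

theorem iIndepFun.toReal_measure_sup_range_le {Ω : Type*} [MeasurableSpace Ω] {μ : Measure Ω}
    [IsProbabilityMeasure μ] {X : ℕ → Ω → ℕ} (hmeas : ∀ i, Measurable (X i))
    (hindep : iIndepFun X μ) (hident : ∀ i, μ.map (X i) = μ.map (X 0)) (n k : ℕ) :
    (μ {ω | (Finset.range n).sup (fun i => X i ω) ≤ k}).toReal =
      (1 - (μ {ω | k < X 0 ω}).toReal) ^ n := by
  have hmax : {ω | (Finset.range n).sup (fun i => X i ω) ≤ k} =
      ⋂ i ∈ Finset.range n, X i ⁻¹' Set.Iic k := by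
    ext ω
    simp [Finset.sup_le_iff]
  have hcompl : X 0 ⁻¹' Set.Iic k = {ω | k < X 0 ω}ᶜ := by
    ext ω
    simp
  rw [hmax, hindep.measure_biInter_preimage_eq_pow hmeas hident _ measurableSet_Iic,
    Finset.card_range, ENNReal.toReal_pow, hcompl,
    prob_compl_eq_one_sub (s := {ω | k < X 0 ω}) (hmeas 0 measurableSet_Ioi),
    ENNReal.toReal_sub_of_le prob_le_one ENNReal.one_ne_top, ENNReal.toReal_one]

end ProbabilityTheory

theorem tendsto_div_add_of_tendsto_succ_div {f : ℕ → ℝ} (hf : ∀ t, f t ≠ 0) {γ : ℝ}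
    (hγ : Tendsto (fun t => f (t + 1) / f t) atTop (𝓝 γ)) (c : ℕ) :
    Tendsto (fun t => f (t + c) / f t) atTop (𝓝 (γ ^ c)) := by
  induction c with
  | zero => simp [div_self (hf _)]
  | succ c ih =>
    have hstep := (hγ.comp (tendsto_add_atTop_nat c)).mul ih
    rw [← pow_succ'] at hstep
    refine hstep.congr fun t => ?_
    rw [Function.comp_apply, div_mul_div_cancel₀ (hf _), ← add_assoc]

theorem tendsto_div_toNat_add_of_tendsto_succ_div {f : ℕ → ℝ} (hf : ∀ t, f t ≠ 0) {γ : ℝ}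
    (hγ0 : γ ≠ 0) (hγ : Tendsto (fun t => f (t + 1) / f t) atTop (𝓝 γ)) (z : ℤ) :
    Tendsto (fun t : ℕ => f ((t : ℤ) + z).toNat / f t) atTop (𝓝 (γ ^ z)) := by
  obtain ⟨c, rfl | rfl⟩ := z.eq_nat_or_neg
  · rw [zpow_natCast]
    refine (tendsto_div_add_of_tendsto_succ_div hf hγ c).congr fun t => ?_
    rw [show ((t : ℤ) + c).toNat = t + c by omega]
  · have h := ((tendsto_div_add_of_tendsto_succ_div hf hγ c).inv₀ (pow_ne_zero c hγ0)).comp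
      (tendsto_sub_atTop_nat c)
    rw [zpow_neg, zpow_natCast]
    refine h.congr' ?_
    filter_upwards [eventually_ge_atTop c] with t ht
    have hsub : ((t : ℤ) + -c).toNat = t - c := by omega
    rw [Function.comp_apply, Nat.sub_add_cancel ht, inv_div, hsub]

theorem tendsto_atTop_of_antitoneOn_of_tendsto_zero {G : ℝ → ℝ} (hG : AntitoneOn G (Set.Ici 0))
    (hpos : ∀ y ∈ Set.Ici (0 : ℝ), 0 < G y) {ι : Type*} {l : Filter ι} {y : ι → ℝ}
    (hy0 : ∀ᶠ i in l, 0 ≤ y i) (hy : Tendsto (fun i => G (y i)) l (𝓝 0)) :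
    Tendsto y l atTop := by
  refine tendsto_atTop.2 fun M => ?_
  have hM : 0 < G (max M 0) := hpos _ (le_max_right M 0)
  filter_upwards [hy0, hy.eventually_lt_const hM] with i hi0 hiM
  by_contra! hlt
  exact hiM.not_ge (hG hi0 (le_max_right M 0) (hlt.le.trans (le_max_left M 0)))

theorem tendsto_one_sub_pow_sub_exp_neg_mul {u : ℕ → ℝ} {C : ℝ}
    (hu0 : ∀ᶠ n in atTop, 0 ≤ u n) (hu : Tendsto u atTop (𝓝 0)) (hC : ∀ᶠ n in atTop, n * u n ≤ C) :
    Tendsto (fun n => (1 - u n) ^ n - Real.exp (-(n * u n))) atTop (𝓝 0) := by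
  refine squeeze_zero_norm' ?_ (by simpa using hu.const_mul C)
  filter_upwards [hu0, hu.eventually_le_const zero_lt_one, hC] with n h0 h1 hCn
  have hexp : |(1 - u n) - Real.exp (-u n)| ≤ u n ^ 2 := by
    have := Real.abs_exp_sub_one_sub_id_le (x := -u n) (by rwa [abs_neg, abs_of_nonneg h0])
    rwa [neg_sq, ← abs_neg, show -(Real.exp (-u n) - 1 - -u n) = 1 - u n - Real.exp (-u n) by
      ring] at this
  have hmax : max |1 - u n| |Real.exp (-u n)| ≤ 1 := by
    rw [abs_of_nonneg (by linarith), abs_of_pos (Real.exp_pos _)]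
    exact max_le (by linarith) (Real.exp_le_one_iff.2 (by linarith))
  calc ‖(1 - u n) ^ n - Real.exp (-(n * u n))‖
      = |(1 - u n) ^ n - Real.exp (-u n) ^ n| := by
        rw [Real.norm_eq_abs, ← Real.exp_nat_mul, mul_neg]
    _ ≤ |(1 - u n) - Real.exp (-u n)| * n * max |1 - u n| |Real.exp (-u n)| ^ (n - 1) :=
      abs_pow_sub_pow_le _ _ _
    _ ≤ u n ^ 2 * n * 1 := by gcongr; exact pow_le_one₀ (by positivity) hmax
    _ = (n * u n) * u n := by ring
    _ ≤ C * u n := by gcongr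

theorem tendsto_exp_neg_sub_exp_neg {ι : Type*} {l : Filter ι} {a b : ι → ℝ}
    (hb : ∀ᶠ i in l, 0 ≤ b i) (hab : Tendsto (fun i => a i - b i) l (𝓝 0)) :
    Tendsto (fun i => Real.exp (-a i) - Real.exp (-b i)) l (𝓝 0) := by
  have hfactor : Tendsto (fun i => Real.exp (b i - a i) - 1) l (𝓝 0) := by
    simpa using ((Real.continuous_exp.tendsto 0).comp (by simpa using hab.neg)).sub_const 1
  have hbdd : IsBoundedUnder (· ≤ ·) l (norm ∘ fun i => Real.exp (-b i)) :=
    isBoundedUnder_of_eventually_le (a := 1) <| hb.mono fun i hi => by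
      simpa [abs_of_pos (Real.exp_pos _)] using hi
  refine (hfactor.zero_mul_isBoundedUnder_le hbdd).congr fun i => ?_
  rw [sub_mul, one_mul, ← Real.exp_add]
  ring_nf

theorem tendsto_one_sub_pow_sub_exp_neg {u b : ℕ → ℝ} {C : ℝ}
    (hu0 : ∀ᶠ n in atTop, 0 ≤ u n) (hu : Tendsto u atTop (𝓝 0))
    (hb0 : ∀ᶠ n in atTop, 0 ≤ b n) (hbC : ∀ᶠ n in atTop, b n ≤ C)
    (hub : Tendsto (fun n => n * u n - b n) atTop (𝓝 0)) :
    Tendsto (fun n => (1 - u n) ^ n - Real.exp (-b n)) atTop (𝓝 0) := by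
  have hC : ∀ᶠ n in atTop, n * u n ≤ C + 1 := by
    filter_upwards [hbC, hub.eventually_le_const zero_lt_one] with n h1 h2
    linarith
  simpa using (tendsto_one_sub_pow_sub_exp_neg_mul hu0 hu hC).add
    (tendsto_exp_neg_sub_exp_neg hb0 hub)

theorem tendsto_one_sub_pow_sub_exp_neg_of_tendsto_succ_div {f : ℕ → ℝ} (hf : ∀ t, 0 < f t)
    (hf0 : Tendsto f atTop (𝓝 0)) {γ : ℝ} (hγ0 : 0 < γ)
    (hγ : Tendsto (fun t => f (t + 1) / f t) atTop (𝓝 γ)) {j : ℕ → ℕ}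
    (hj : Tendsto j atTop atTop) {θ : ℕ → ℝ} {C : ℝ} (hθ : ∀ᶠ n in atTop, θ n = n * f (j n))
    (hθC : ∀ᶠ n in atTop, θ n ≤ C) (z : ℤ) :
    Tendsto (fun n => (1 - f ((j n : ℤ) + z).toNat) ^ n - Real.exp (-(θ n * γ ^ z)))
      atTop (𝓝 0) := by
  have hρ :=
    (tendsto_div_toNat_add_of_tendsto_succ_div (fun t => (hf t).ne') hγ0.ne' hγ z).comp hj
  have hγz : 0 < γ ^ z := zpow_pos hγ0 z
  have hθ0 : ∀ᶠ n in atTop, 0 ≤ θ n := hθ.mono fun n h => h ▸ mul_nonneg n.cast_nonneg (hf _).le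
  have hθ_bdd : IsBoundedUnder (· ≤ ·) atTop (norm ∘ θ) :=
    isBoundedUnder_of_eventually_le (a := C) <| by
      filter_upwards [hθ0, hθC] with n h0 hC
      rwa [Function.comp_apply, Real.norm_of_nonneg h0]
  refine tendsto_one_sub_pow_sub_exp_neg (C := C * γ ^ z) (.of_forall fun n => (hf _).le) ?_
    (hθ0.mono fun n h => mul_nonneg h hγz.le)
    (hθC.mono fun n h => mul_le_mul_of_nonneg_right h hγz.le) ?_
  · simpa using (hρ.mul (hf0.comp hj)).congr fun n => div_mul_cancel₀ _ (hf _).ne'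
  · have hρ' : Tendsto (fun n => f ((j n : ℤ) + z).toNat / f (j n) - γ ^ z) atTop (𝓝 0) := by
      simpa using hρ.sub_const (γ ^ z)
    refine (hρ'.zero_mul_isBoundedUnder_le hθ_bdd).congr' ?_
    filter_upwards [hθ] with n hn
    rw [hn]
    field_simp [(hf (j n)).ne']

namespace AdmissibleExt

variable {Ftail : ℕ → ℝ}

theorem ftail_pos (E : AdmissibleExt Ftail) (t : ℕ) : 0 < Ftail t :=
  E.agrees t ▸ E.pos t (Set.mem_Ici.2 (Nat.cast_nonneg t))

theorem tendsto_ftail_zero (E : AdmissibleExt Ftail) : Tendsto Ftail atTop (𝓝 0) :=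
  (E.tendsto_zero.comp tendsto_natCast_atTop_atTop).congr E.agrees

theorem tendsto_floor_add_half_atTop (E : AdmissibleExt Ftail) {x : ℕ → ℝ}
    (hx0 : ∀ n, 2 ≤ n → 0 ≤ x n) (hx : ∀ n, 2 ≤ n → E.G (x n) = 1 / n) :
    Tendsto (fun n => ⌊x n + 1 / 2⌋) atTop atTop := by
  have hG : Tendsto (fun n => E.G (x n)) atTop (𝓝 0) :=
    tendsto_one_div_atTop_nhds_zero_nat.congr' (eventually_atTop.2 ⟨2, fun n hn => (hx n hn).symm⟩)
  have hx_top := tendsto_atTop_of_antitoneOn_of_tendsto_zero E.anti.antitoneOn E.pos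
    (eventually_atTop.2 ⟨2, hx0⟩) hG
  exact tendsto_floor_atTop.comp (tendsto_atTop_add_const_right _ _ hx_top)

theorem G_div_G_le_ftail_div_ftail_succ (E : AdmissibleExt Ftail) {y : ℝ} {j : ℕ} (hy0 : 0 ≤ y)
    (hyj : y ≤ j + 1) :
    E.G j / E.G y ≤ Ftail j / Ftail (j + 1) := by
  have hG : E.G (j + 1 : ℕ) ≤ E.G y :=
    E.anti.antitoneOn hy0 (Set.mem_Ici.2 (Nat.cast_nonneg _)) (by exact_mod_cast hyj)
  rw [E.agrees] at hG ⊢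
  exact div_le_div_of_nonneg_left (E.ftail_pos j).le (E.ftail_pos _) hG

end AdmissibleExt

theorem max_iid_limit_of_ratio_tendsto_gamma_mem_Ioo_general
    {Ω : Type} [MeasurableSpace Ω] (μ : Measure Ω) [IsProbabilityMeasure μ]
    (X : ℕ → Ω → ℕ) (hmeas : ∀ i, Measurable (X i))
    (hindep : iIndepFun X μ)
    (hident : ∀ i, μ.map (X i) = μ.map (X 0))
    (Ftail : ℕ → ℝ) (hFtail : ∀ t : ℕ, Ftail t = (μ {ω | t < X 0 ω}).toReal)
    (γ : ℝ) (hγ0 : 0 < γ)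
    (hγ : Tendsto (fun t : ℕ => Ftail (t + 1) / Ftail t) atTop (nhds γ))
    (E : AdmissibleExt Ftail)
    (x : ℕ → ℝ) (hx0 : ∀ n, 2 ≤ n → 0 ≤ x n)
    (hx : ∀ n, 2 ≤ n → E.G (x n) = 1 / n)
    (m : ℕ → ℤ) (hm : ∀ n, m n = ⌊x n + 1 / 2⌋)
    (θ : ℕ → ℝ) (hθ : ∀ n, θ n = E.G (m n) / E.G (x n)) :
    ∀ z : ℤ,
      Tendsto (fun n =>
          (μ {ω | (((Finset.range n).sup fun i => X i ω : ℕ) : ℤ) ≤ m n + z}).toReal -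
            Real.exp (-(θ n * γ ^ z)))
        atTop (nhds 0) := by
  intro z
  have hm_top : Tendsto m atTop atTop :=
    (E.tendsto_floor_add_half_atTop hx0 hx).congr fun n => (hm n).symm
  set j : ℕ → ℕ := fun n => (m n).toNat
  have hjm : ∀ᶠ n in atTop, (j n : ℤ) = m n :=
    (hm_top.eventually_ge_atTop 0).mono fun n => Int.toNat_of_nonneg
  have hj_top : Tendsto j atTop atTop :=
    tendsto_natCast_atTop_iff.1 (hm_top.congr' (hjm.mono fun n h => h.symm))
  have hθ_eq : ∀ᶠ n in atTop, θ n = n * Ftail (j n) := by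
    filter_upwards [hjm, eventually_ge_atTop 2] with n hn h2
    rw [hθ, hx n h2, ← hn, Int.cast_natCast, E.agrees]
    field_simp
  have hθ_bdd : ∀ᶠ n in atTop, θ n ≤ γ⁻¹ + 1 := by
    have hinv : Tendsto (fun n => Ftail (j n) / Ftail (j n + 1)) atTop (𝓝 γ⁻¹) := by
      simpa [Function.comp_def, inv_div] using (hγ.inv₀ hγ0.ne').comp hj_top
    filter_upwards [hjm, eventually_ge_atTop 2, hinv.eventually_le_const (lt_add_one _)]
      with n hn h2 hlim
    have hround : x n ≤ j n + 1 := by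
      have := Int.lt_floor_add_one (x n + 1 / 2)
      rw [← hm, ← hn, Int.cast_natCast] at this
      linarith
    rw [hθ, ← hn, Int.cast_natCast]
    exact (E.G_div_G_le_ftail_div_ftail_succ (hx0 n h2) hround).trans hlim
  have hprob : ∀ᶠ n in atTop,
      (μ {ω | (((Finset.range n).sup fun i => X i ω : ℕ) : ℤ) ≤ m n + z}).toReal =
        (1 - Ftail ((j n : ℤ) + z).toNat) ^ n := by
    filter_upwards [hjm, hm_top.eventually_ge_atTop (-z)] with n hn hz
    have hset : {ω | (((Finset.range n).sup fun i => X i ω : ℕ) : ℤ) ≤ m n + z} =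
        {ω | (Finset.range n).sup (fun i => X i ω) ≤ ((j n : ℤ) + z).toNat} := by
      ext ω
      simp only [Set.mem_ofPred_eq]
      rw [Int.le_toNat (by omega), hn]
    rw [hset, hindep.toReal_measure_sup_range_le hmeas hident, hFtail]
  exact (tendsto_one_sub_pow_sub_exp_neg_of_tendsto_succ_div E.ftail_pos E.tendsto_ftail_zero
    hγ0 hγ hj_top hθ_eq hθ_bdd z).congr' (hprob.mono fun n h => by simp only [h])

/-- **Theorem (γ ∈ (0,1) case).** For i.i.d. `ℕ`-valued random variables whose tail ratio
`ℱ(n+1)/ℱ(n)` tends to `γ ∈ (0,1)`, with `mₙ`, `θₙ`, `pₙ` defined from any admissible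
extension `G`, for every fixed `x ∈ ℤ` one has
`P(X₍ₙ₎ ≤ mₙ + x) − pₙ^(γ^x) → 0`, where `pₙ^(γ^x) = exp(−θₙ γ^x)`. -/
theorem max_iid_limit_of_ratio_tendsto_gamma_mem_Ioo
    {Ω : Type} [MeasurableSpace Ω] (μ : Measure Ω) [IsProbabilityMeasure μ]
    (X : ℕ → Ω → ℕ) (hmeas : ∀ i, Measurable (X i))
    (hindep : iIndepFun X μ)
    (hident : ∀ i, μ.map (X i) = μ.map (X 0))
    (Ftail : ℕ → ℝ) (hFtail : ∀ t : ℕ, Ftail t = (μ {ω | t < X 0 ω}).toReal)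
    (hsupp : ∀ t : ℕ, 0 < Ftail t)
    (γ : ℝ) (hγ0 : 0 < γ) (hγ1 : γ < 1)
    (hγ : Tendsto (fun t : ℕ => Ftail (t + 1) / Ftail t) atTop (nhds γ))
    (E : AdmissibleExt Ftail)
    (x : ℕ → ℝ) (hx0 : ∀ n, 2 ≤ n → 0 ≤ x n)
    (hx : ∀ n, 2 ≤ n → E.G (x n) = 1 / n)
    (m : ℕ → ℤ) (hm : ∀ n, m n = ⌊x n + 1 / 2⌋)
    (θ : ℕ → ℝ) (hθ : ∀ n, θ n = E.G (m n) / E.G (x n))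
    (p : ℕ → ℝ) (hp : ∀ n, p n = Real.exp (-θ n)) :
    ∀ z : ℤ,
      Tendsto (fun n =>
          (μ {ω | (((Finset.range n).sup fun i => X i ω : ℕ) : ℤ) ≤ m n + z}).toReal -
            Real.exp (-(θ n * γ ^ z)))
        atTop (nhds 0) :=
  max_iid_limit_of_ratio_tendsto_gamma_mem_Ioo_general μ X hmeas hindep hident Ftail hFtail γ hγ0 hγ
    E x hx0 hx m hm θ hθ
end

section
/- Let γ = 1, i.e. lim_{n→∞} ℱ(n+1)/ℱ(n) = 1. Then, with m_n and p_n defined from any admissible extension G, for every fixed x ∈ ℤ one has P(X_{(n)} ≤ m_n + x) − p_n → 0 as n → ∞ (and in fact p_n → e^{−1}). -/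
open MeasureTheory ProbabilityTheory Filter

/-!
Because `ℱ(t+1)/ℱ(t) → 1`, the convex function `log G` has unit increments tending to `0` at the
integers. Secant slopes of a convex function are monotone, so every secant slope of `log G` between
two points tending to infinity tends to `0`; hence `G y / G x → 1` whenever `x → ∞` with `y - x`
bounded. With `x = xₙ`, `y = mₙ + z` this gives `θₙ → 1` and `n ℱ(mₙ + z) → 1`, and by independence
`P(X₍ₙ₎ ≤ mₙ + z) = (1 - ℱ(mₙ + z))ⁿ → e⁻¹`.
-/

open Real Set

lemma tendsto_atTop_of_abs_sub_le {ι : Type*} {l : Filter ι} {a b : ι → ℝ} {C : ℝ}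
    (ha : Tendsto a l atTop) (hC : ∀ i, |b i - a i| ≤ C) : Tendsto b l atTop :=
  tendsto_atTop_mono (fun i => by linarith [neg_abs_le (b i - a i), hC i])
    (tendsto_atTop_add_const_right l (-C) ha)

namespace ConvexOn

variable {f : ℝ → ℝ}

lemma slope_le_slope_of_le {s : Set ℝ} (hf : ConvexOn ℝ s f) {p q a b : ℝ} (hp : p ∈ s)
    (hb : b ∈ s) (hpq : p < q) (hab : a < b) (hpa : p ≤ a) (hqb : q ≤ b) :
    slope f p q ≤ slope f a b := by
  have hs := hf.1.ordConnected
  have hq : q ∈ s := hs.out hp hb ⟨hpq.le, hqb⟩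
  have ha : a ∈ s := hs.out hp hb ⟨hpa, hab.le⟩
  calc slope f p q ≤ slope f p b :=
        hf.slope_mono hp ⟨hq, hpq.ne'⟩ ⟨hb, (hpq.trans_le hqb).ne'⟩ hqb
    _ = slope f b p := slope_comm f p b
    _ ≤ slope f b a := hf.slope_mono hb ⟨hp, (hpq.trans_le hqb).ne⟩ ⟨ha, hab.ne⟩ hpa
    _ = slope f a b := slope_comm f b a

lemma abs_slope_le (hf : ConvexOn ℝ (Ici 0) f) {u v : ℝ} (hu : 1 ≤ u) (huv : u ≤ v) :
    |slope f u v| ≤ |slope f ⌊u - 1⌋₊ (⌊u - 1⌋₊ + 1)| + |slope f ⌈v⌉₊ (⌈v⌉₊ + 1)| := by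
  rcases huv.eq_or_lt with rfl | huv
  · rw [slope_same, abs_zero]
    positivity
  have hfloor : (⌊u - 1⌋₊ : ℝ) ≤ u - 1 := Nat.floor_le (by linarith)
  have hceil : v ≤ ⌈v⌉₊ := Nat.le_ceil v
  have hlower := hf.slope_le_slope_of_le (p := ⌊u - 1⌋₊) (a := u) (b := v)
    (mem_Ici.2 (Nat.cast_nonneg _)) (mem_Ici.2 (by linarith)) (lt_add_one _) huv (by linarith)
    (by linarith)
  have hupper := hf.slope_le_slope_of_le (p := u) (a := ⌈v⌉₊) (b := ⌈v⌉₊ + 1)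
    (mem_Ici.2 (by linarith)) (mem_Ici.2 (by positivity)) huv (lt_add_one _)
    (huv.le.trans hceil) (by linarith)
  set lo := slope f ⌊u - 1⌋₊ (⌊u - 1⌋₊ + 1)
  set hi := slope f ⌈v⌉₊ (⌈v⌉₊ + 1)
  exact abs_le.2 ⟨by linarith [neg_abs_le lo, abs_nonneg hi],
    by linarith [le_abs_self hi, abs_nonneg lo]⟩

variable {ι : Type*} {l : Filter ι} {a b : ι → ℝ}

theorem tendsto_slope_zero (hf : ConvexOn ℝ (Ici 0) f)
    (hs : Tendsto (fun k : ℕ => slope f k (k + 1)) atTop (nhds 0))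
    (ha : Tendsto a l atTop) (hb : Tendsto b l atTop) :
    Tendsto (fun i => slope f (a i) (b i)) l (nhds 0) := by
  set d : ℕ → ℝ := fun k => |slope f k (k + 1)|
  have hmin : Tendsto (fun i => min (a i) (b i)) l atTop := tendsto_inf_atTop l ha hb
  have hmax : Tendsto (fun i => max (a i) (b i)) l atTop :=
    tendsto_atTop_mono (fun i => le_max_left _ _) ha
  have hbound : ∀ u v : ℝ, 1 ≤ min u v →
      ‖slope f u v‖ ≤ d ⌊min u v - 1⌋₊ + d ⌈max u v⌉₊ := by
    intro u v huv
    rcases le_total u v with h | h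
    · rw [min_eq_left h, max_eq_right h] at *
      exact hf.abs_slope_le huv h
    · rw [min_eq_right h, max_eq_left h, slope_comm] at *
      exact hf.abs_slope_le huv h
  have hd : Tendsto d atTop (nhds 0) := by simpa using hs.abs
  have hmin' : Tendsto (fun i => min (a i) (b i) - 1) l atTop := by
    simpa [sub_eq_add_neg] using tendsto_atTop_add_const_right l (-1) hmin
  have hlim : Tendsto (fun i => d ⌊min (a i) (b i) - 1⌋₊ + d ⌈max (a i) (b i)⌉₊) l (nhds 0) := by
    simpa using (hd.comp <| tendsto_nat_floor_atTop.comp hmin').add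
      (hd.comp <| tendsto_nat_ceil_atTop.comp hmax)
  exact squeeze_zero_norm' ((hmin.eventually_ge_atTop 1).mono fun i hi => hbound _ _ hi) hlim

theorem tendsto_sub_zero (hf : ConvexOn ℝ (Ici 0) f)
    (hs : Tendsto (fun k : ℕ => slope f k (k + 1)) atTop (nhds 0))
    (ha : Tendsto a l atTop) {C : ℝ} (hC : ∀ i, |b i - a i| ≤ C) :
    Tendsto (fun i => f (b i) - f (a i)) l (nhds 0) := by
  have hslope := hf.tendsto_slope_zero hs ha (tendsto_atTop_of_abs_sub_le ha hC)
  have hbdd : IsBoundedUnder (· ≤ ·) l fun i => ‖b i - a i‖ :=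
    isBoundedUnder_of ⟨C, fun i => hC i⟩
  refine (hslope.zero_mul_isBoundedUnder_le hbdd).congr fun i => ?_
  rw [mul_comm, ← smul_eq_mul, sub_smul_slope, vsub_eq_sub]

end ConvexOn

namespace AdmissibleExt

variable {Ftail : ℕ → ℝ} (E : AdmissibleExt Ftail) {ι : Type*} {l : Filter ι}

lemma tendsto_atTop_of_tendsto_G {x : ι → ℝ} (hx0 : ∀ᶠ i in l, 0 ≤ x i)
    (hx : Tendsto (fun i => E.G (x i)) l (nhds 0)) : Tendsto x l atTop := by
  refine tendsto_atTop.2 fun B => ?_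
  have hB : max B 0 ∈ Ici (0 : ℝ) := le_max_right B 0
  filter_upwards [hx0, hx.eventually_lt_const (E.pos _ hB)] with i hi hlt
  exact (le_max_left B 0).trans ((E.anti.lt_iff_gt hi hB).1 hlt).le

lemma tendsto_slope_log_G (hγ : Tendsto (fun t : ℕ => Ftail (t + 1) / Ftail t) atTop (nhds 1)) :
    Tendsto (fun k : ℕ => slope (fun y => log (E.G y)) k (k + 1)) atTop (nhds 0) := by
  have hpos : ∀ k : ℕ, 0 < Ftail k := fun k => E.agrees k ▸ E.pos k (mem_Ici.2 (Nat.cast_nonneg k))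
  have hlog : Tendsto (fun k => log (Ftail (k + 1) / Ftail k)) atTop (nhds 0) := by
    simpa [Function.comp_def] using (continuousAt_log one_ne_zero).tendsto.comp hγ
  refine hlog.congr fun k => ?_
  have hsucc := E.agrees (k + 1)
  push_cast at hsucc
  rw [slope_def_field, add_sub_cancel_left, div_one, log_div (hpos _).ne' (hpos _).ne', hsucc,
    E.agrees]

lemma tendsto_G_div_G (hγ : Tendsto (fun t : ℕ => Ftail (t + 1) / Ftail t) atTop (nhds 1))
    {a b : ι → ℝ} (ha : Tendsto a l atTop) {C : ℝ} (hC : ∀ i, |b i - a i| ≤ C) :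
    Tendsto (fun i => E.G (b i) / E.G (a i)) l (nhds 1) := by
  have hlog := E.logConvex.tendsto_sub_zero (E.tendsto_slope_log_G hγ) ha hC
  have hexp := (continuous_exp.tendsto 0).comp hlog
  rw [exp_zero] at hexp
  refine hexp.congr' ?_
  filter_upwards [ha.eventually_ge_atTop 0,
    (tendsto_atTop_of_abs_sub_le ha hC).eventually_ge_atTop 0] with i hai hbi
  rw [Function.comp_apply, exp_sub, exp_log (E.pos _ hbi), exp_log (E.pos _ hai)]

end AdmissibleExt

lemma toReal_measure_sup_range_le {Ω : Type*} [MeasurableSpace Ω] {μ : Measure Ω}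
    [IsProbabilityMeasure μ] {X : ℕ → Ω → ℕ} (hmeas : ∀ i, Measurable (X i))
    (hindep : iIndepFun X μ) (hident : ∀ i, μ.map (X i) = μ.map (X 0)) (n k : ℕ) :
    (μ {ω | (Finset.range n).sup (fun i => X i ω) ≤ k}).toReal =
      (1 - (μ {ω | k < X 0 ω}).toReal) ^ n := by
  have hset : {ω | (Finset.range n).sup (fun i => X i ω) ≤ k} =
      ⋂ i ∈ Finset.range n, X i ⁻¹' Iic k := by
    ext ω
    simp [Finset.sup_le_iff]
  have hsame : ∀ i, μ (X i ⁻¹' Iic k) = μ (X 0 ⁻¹' Iic k) := fun i => by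
    rw [← Measure.map_apply (hmeas i) measurableSet_Iic, hident i,
      Measure.map_apply (hmeas 0) measurableSet_Iic]
  have hcompl : {ω | k < X 0 ω} = (X 0 ⁻¹' Iic k)ᶜ := by
    ext ω
    simp
  rw [hset, hindep.meas_biInter fun i _ => ⟨Iic k, measurableSet_Iic, rfl⟩,
    Finset.prod_congr rfl fun i _ => hsame i, Finset.prod_const, Finset.card_range,
    ENNReal.toReal_pow, hcompl, prob_compl_eq_one_sub (hmeas 0 measurableSet_Iic),
    ENNReal.toReal_sub_of_le prob_le_one ENNReal.one_ne_top, ENNReal.toReal_one, sub_sub_cancel]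

theorem max_iid_limit_of_ratio_tendsto_one_general
    {Ω : Type} [MeasurableSpace Ω] (μ : Measure Ω) [IsProbabilityMeasure μ]
    (X : ℕ → Ω → ℕ) (hmeas : ∀ i, Measurable (X i))
    (hindep : iIndepFun X μ)
    (hident : ∀ i, μ.map (X i) = μ.map (X 0))
    (Ftail : ℕ → ℝ) (hFtail : ∀ t : ℕ, Ftail t = (μ {ω | t < X 0 ω}).toReal)
    (hγ : Tendsto (fun t : ℕ => Ftail (t + 1) / Ftail t) atTop (nhds 1))
    (E : AdmissibleExt Ftail)
    (x : ℕ → ℝ) (hx0 : ∀ n, 2 ≤ n → 0 ≤ x n)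
    (hx : ∀ n, 2 ≤ n → E.G (x n) = 1 / n)
    (m : ℕ → ℤ) (hm : ∀ n, m n = ⌊x n + 1 / 2⌋)
    (θ : ℕ → ℝ) (hθ : ∀ n, θ n = E.G (m n) / E.G (x n))
    (p : ℕ → ℝ) (hp : ∀ n, p n = Real.exp (-θ n)) :
    (∀ z : ℤ,
      Tendsto (fun n =>
          (μ {ω | (((Finset.range n).sup fun i => X i ω : ℕ) : ℤ) ≤ m n + z}).toReal - p n)
        atTop (nhds 0)) ∧
    Tendsto p atTop (nhds (Real.exp (-1))) := by
  have hxtop : Tendsto x atTop atTop :=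
    E.tendsto_atTop_of_tendsto_G (eventually_atTop.2 ⟨2, hx0⟩) <|
      tendsto_one_div_atTop_nhds_zero_nat.congr' <|
        eventually_atTop.2 ⟨2, fun n hn => (hx n hn).symm⟩
  have hround (z : ℤ) (n : ℕ) : |((m n + z : ℤ) : ℝ) - x n| ≤ 1 / 2 + |z| := by
    rw [hm n, ← round_eq, Int.cast_add, add_sub_right_comm, Int.cast_abs]
    exact (abs_add_le _ _).trans (add_le_add (abs_sub_comm (x n) _ ▸ abs_sub_round (x n)) le_rfl)
  have hratio (z : ℤ) := E.tendsto_G_div_G hγ hxtop (hround z)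
  have hp1 : Tendsto p atTop (nhds (exp (-1))) := by
    have hθ1 : Tendsto θ atTop (nhds 1) := (hratio 0).congr fun n => by rw [hθ, add_zero]
    exact ((continuous_exp.tendsto _).comp hθ1.neg).congr fun n => (hp n).symm
  refine ⟨fun z => ?_, hp1⟩
  have hnonneg : ∀ᶠ n in atTop, 0 ≤ m n + z :=
    ((tendsto_atTop_of_abs_sub_le hxtop (hround z)).eventually_ge_atTop 0).mono
      fun n hn => by exact_mod_cast hn
  have hnF : Tendsto (fun n : ℕ => n * -Ftail (m n + z).toNat) atTop (nhds (-1)) := by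
    refine (hratio z).neg.congr' ?_
    filter_upwards [hnonneg, eventually_ge_atTop 2] with n hn hn2
    rw [← Int.toNat_of_nonneg hn, Int.cast_natCast, E.agrees, hx n hn2, Int.toNat_natCast]
    field_simp
  have hpow := Real.tendsto_one_add_pow_exp_of_tendsto hnF
  rw [← sub_self (exp (-1))]
  refine (hpow.sub hp1).congr' <| hnonneg.mono fun n hn => ?_
  obtain ⟨k, hk⟩ := Int.eq_ofNat_of_zero_le hn
  simp only [hk, Int.toNat_natCast, Nat.cast_le]
  rw [toReal_measure_sup_range_le hmeas hindep hident, ← hFtail, ← sub_eq_add_neg]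

/-- **Theorem (γ = 1 case).** For i.i.d. `ℕ`-valued random variables whose tail ratio
`ℱ(n+1)/ℱ(n)` tends to `1`, with `mₙ`, `pₙ` defined from any admissible extension `G`,
for every fixed `x ∈ ℤ` one has `P(X₍ₙ₎ ≤ mₙ + x) − pₙ → 0`; moreover `pₙ → e⁻¹`. -/
theorem max_iid_limit_of_ratio_tendsto_one
    {Ω : Type} [MeasurableSpace Ω] (μ : Measure Ω) [IsProbabilityMeasure μ]
    (X : ℕ → Ω → ℕ) (hmeas : ∀ i, Measurable (X i))
    (hindep : iIndepFun X μ)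
    (hident : ∀ i, μ.map (X i) = μ.map (X 0))
    (Ftail : ℕ → ℝ) (hFtail : ∀ t : ℕ, Ftail t = (μ {ω | t < X 0 ω}).toReal)
    (hsupp : ∀ t : ℕ, 0 < Ftail t)
    (hγ : Tendsto (fun t : ℕ => Ftail (t + 1) / Ftail t) atTop (nhds 1))
    (E : AdmissibleExt Ftail)
    (x : ℕ → ℝ) (hx0 : ∀ n, 2 ≤ n → 0 ≤ x n)
    (hx : ∀ n, 2 ≤ n → E.G (x n) = 1 / n)
    (m : ℕ → ℤ) (hm : ∀ n, m n = ⌊x n + 1 / 2⌋)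
    (θ : ℕ → ℝ) (hθ : ∀ n, θ n = E.G (m n) / E.G (x n))
    (p : ℕ → ℝ) (hp : ∀ n, p n = Real.exp (-θ n)) :
    (∀ z : ℤ,
      Tendsto (fun n =>
          (μ {ω | (((Finset.range n).sup fun i => X i ω : ℕ) : ℤ) ≤ m n + z}).toReal - p n)
        atTop (nhds 0)) ∧
    Tendsto p atTop (nhds (Real.exp (-1))) :=
  max_iid_limit_of_ratio_tendsto_one_general μ X hmeas hindep hident Ftail hFtail hγ E x hx0 hx m hm
    θ hθ p hp
end

section
/- Let G : [0,∞) → (0,∞) be continuous, strictly decreasing and log-convex, and suppose lim_{n→∞, n∈ℕ} G(n+1)/G(n) = γ for some γ ∈ [0,1]. Then for every ε ∈ (0,1), lim_{x→+∞} G(x+ε)/G(x) = γ^ε (with the convention 0^ε = 0). -/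
open Filter

/-- General secant monotonicity for convex functions: if `a < b`, `c < d`, `a ≤ c`, `b ≤ d`,
then the slope over `[a,b]` is at most the slope over `[c,d]`. -/
lemma convexOn_slope_mono {f : ℝ → ℝ} (hf : ConvexOn ℝ (Set.Ici 0) f)
    {a b c d : ℝ} (ha : a ∈ Set.Ici (0:ℝ)) (hb : b ∈ Set.Ici (0:ℝ)) (hc : c ∈ Set.Ici (0:ℝ))
    (hd : d ∈ Set.Ici (0:ℝ)) (hab : a < b) (hcd : c < d) (hac : a ≤ c) (hbd : b ≤ d) :
    (f b - f a) / (b - a) ≤ (f d - f c) / (d - c) := by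
  have had : a < d := lt_of_le_of_lt hac hcd
  have h1 : (f b - f a) / (b - a) ≤ (f d - f a) / (d - a) :=
    hf.secant_mono ha hb hd hab.ne' had.ne' hbd
  have h2 : (f a - f d) / (a - d) ≤ (f c - f d) / (c - d) :=
    hf.secant_mono hd ha hc had.ne hcd.ne hac
  have e1 : (f a - f d) / (a - d) = (f d - f a) / (d - a) := by
    rw [← neg_div_neg_eq]; ring_nf
  have e2 : (f c - f d) / (c - d) = (f d - f c) / (d - c) := by
    rw [← neg_div_neg_eq]; ring_nf
  rw [e1, e2] at h2
  linarith

/-- **Lemma (fractional ratio limit for log-convex functions).** If `G : [0,∞) → (0,∞)` is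
continuous, strictly decreasing and log-convex, and `G(n+1)/G(n) → γ ∈ [0,1]` along the
integers, then for every `ε ∈ (0,1)`, `G(x+ε)/G(x) → γ^ε` as the real `x → +∞`
(with the convention `0^ε = 0`, which is how `Real.rpow` behaves for `ε ≠ 0`). -/
theorem tendsto_ratio_rpow_of_logConvex
    (G : ℝ → ℝ)
    (hpos : ∀ x ∈ Set.Ici (0 : ℝ), 0 < G x)
    (hcont : ContinuousOn G (Set.Ici 0))
    (hanti : StrictAntiOn G (Set.Ici 0))
    (hlogConvex : ConvexOn ℝ (Set.Ici 0) fun x => Real.log (G x))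
    (γ : ℝ) (hγ0 : 0 ≤ γ) (hγ1 : γ ≤ 1)
    (hγ : Tendsto (fun n : ℕ => G (n + 1) / G n) atTop (nhds γ)) :
    ∀ ε : ℝ, 0 < ε → ε < 1 →
      Tendsto (fun x : ℝ => G (x + ε) / G x) atTop (nhds (γ ^ ε)) := by
  intro ε hε0 hε1
  set f : ℝ → ℝ := fun x => Real.log (G x) with hf
  -- the sequence of ε-powers of the ratio
  set a : ℕ → ℝ := fun n => (G (n + 1) / G n) ^ ε with ha
  have hrat_pos : ∀ n : ℕ, 0 < G (n + 1) / G n := fun n =>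
    div_pos (hpos _ (Set.mem_Ici.mpr (by positivity))) (hpos _ (Set.mem_Ici.mpr (Nat.cast_nonneg n)))
  have ha_exp : ∀ n : ℕ, a n = Real.exp (ε * (f (n + 1) - f n)) := by
    intro n
    show (G (↑n + 1) / G ↑n) ^ ε = _
    rw [Real.rpow_def_of_pos (hrat_pos n), hf]
    rw [Real.log_div (hpos _ (Set.mem_Ici.mpr (by positivity))).ne' (hpos _ (Set.mem_Ici.mpr (Nat.cast_nonneg n))).ne']
    ring_nf
  have haten : Tendsto a atTop (nhds (γ ^ ε)) :=
    ((Real.continuousAt_rpow_const γ ε (Or.inr hε0.le)).tendsto).comp hγ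
  -- lower and upper bound sequences as functions of x
  have hlow_ten : Tendsto (fun x : ℝ => a ⌊x - 1⌋₊) atTop (nhds (γ ^ ε)) :=
    haten.comp (tendsto_nat_floor_atTop.comp (tendsto_atTop_add_const_right atTop (-1) tendsto_id))
  have hupp_ten : Tendsto (fun x : ℝ => a (⌊x⌋₊ + 1)) atTop (nhds (γ ^ ε)) :=
    haten.comp ((tendsto_add_atTop_nat 1).comp tendsto_nat_floor_atTop)
  refine tendsto_of_tendsto_of_tendsto_of_le_of_le' hlow_ten hupp_ten ?_ ?_
  · -- lower bound
    filter_upwards [eventually_ge_atTop (1:ℝ)] with x hx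
    set m : ℕ := ⌊x - 1⌋₊ with hm
    have hx0 : (0:ℝ) ≤ x := by linarith
    have hm1 : (m:ℝ) ≤ x - 1 := Nat.floor_le (by linarith)
    have hslope : (f (m + 1) - f m) / ((m + 1) - m) ≤ (f (x + ε) - f x) / ((x + ε) - x) := by
      apply convexOn_slope_mono hlogConvex (Set.mem_Ici.mpr (by positivity))
        (Set.mem_Ici.mpr (by positivity)) hx0 (by simp only [Set.mem_Ici]; linarith)
        (by linarith) (by linarith) (by linarith) (by linarith)
    have hslope' : ε * (f (m + 1) - f m) ≤ f (x + ε) - f x := by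
      have h1 : ((m:ℝ) + 1) - m = 1 := by ring
      have h2 : (x + ε) - x = ε := by ring
      rw [h1, h2, div_one] at hslope
      calc ε * (f (m + 1) - f m) ≤ ε * ((f (x + ε) - f x) / ε) := by
            apply mul_le_mul_of_nonneg_left hslope hε0.le
        _ = f (x + ε) - f x := by field_simp
    have hGx : G (x + ε) / G x = Real.exp (f (x + ε) - f x) := by
      rw [hf, Real.exp_sub, Real.exp_log (hpos _ (by simp only [Set.mem_Ici]; linarith)),
        Real.exp_log (hpos _ hx0)]
    rw [hGx, ha_exp m]
    exact Real.exp_le_exp.mpr hslope'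
  · -- upper bound
    filter_upwards [eventually_ge_atTop (1:ℝ)] with x hx
    set k : ℕ := ⌊x⌋₊ + 1 with hk
    have hx0 : (0:ℝ) ≤ x := by linarith
    have hxk : x ≤ (k:ℝ) := by
      have := Nat.lt_floor_add_one x
      push_cast [hk]
      linarith
    have hslope : (f (x + ε) - f x) / ((x + ε) - x) ≤ (f (k + 1) - f k) / ((k + 1) - k) := by
      apply convexOn_slope_mono hlogConvex hx0
        (by simp only [Set.mem_Ici]; linarith) (Set.mem_Ici.mpr (by positivity)) (Set.mem_Ici.mpr (by positivity))
        (by linarith) (by linarith) hxk (by linarith)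
    have hslope' : f (x + ε) - f x ≤ ε * (f (k + 1) - f k) := by
      have h1 : ((k:ℝ) + 1) - k = 1 := by ring
      have h2 : (x + ε) - x = ε := by ring
      rw [h1, h2, div_one] at hslope
      calc f (x + ε) - f x = ε * ((f (x + ε) - f x) / ε) := by field_simp
        _ ≤ ε * (f (k + 1) - f k) := by
            apply mul_le_mul_of_nonneg_left hslope hε0.le
    have hGx : G (x + ε) / G x = Real.exp (f (x + ε) - f x) := by
      rw [hf, Real.exp_sub, Real.exp_log (hpos _ (by simp only [Set.mem_Ici]; linarith)),
        Real.exp_log (hpos _ hx0)]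
    rw [hGx, ha_exp k]
    exact Real.exp_le_exp.mpr hslope'
end

section
/- Suppose lim_{n→∞} ℱ(n+1)/ℱ(n) = γ with γ ∈ (0,1), and let G and G̃ be two admissible extensions of ℱ, with x_n and x̃_n the unique solutions of G(x_n) = 1/n and G̃(x̃_n) = 1/n respectively. Then x_n − x̃_n → 0 as n → ∞. -/
open MeasureTheory ProbabilityTheory Filter

/-!
Write `f = log ∘ G` and `sₘ = log ℱ(m+1) - log ℱ(m)` (`tailLogSlope`). By convexity, on
`[m, m+1]` the graph of `f` lies above the line through `(m, f m)` of slope `sₘ₋₁` and below the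
one of slope `sₘ`; the same holds for `G̃`. Since `G` and `G̃` agree on the integers and are
decreasing, `xₙ` and `x̃ₙ` lie in the same interval `[m, m+1]`, so they are squeezed between the
same two lines and `|xₙ - x̃ₙ| ≤ (sₘ - sₘ₋₁) / (-sₘ)`. As `xₙ → ∞`, both slopes tend to
`log γ < 0`.
-/

open Set

theorem ConvexOn.slope_pred_mul_le_sub_le_slope_mul {s : Set ℝ} {f : ℝ → ℝ}
    (hf : ConvexOn ℝ s f) {a y : ℝ} (h₀ : a - 1 ∈ s) (h₂ : a + 1 ∈ s)
    (hay : a ≤ y) (hya : y ≤ a + 1) :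
    (f a - f (a - 1)) * (y - a) ≤ f y - f a ∧ f y - f a ≤ (f (a + 1) - f a) * (y - a) := by
  rcases hay.eq_or_lt with rfl | hay
  · simp
  have hs := hf.1.ordConnected.out h₀ h₂
  have ha : a ∈ s := hs ⟨by linarith, by linarith⟩
  have hy : y ∈ s := hs ⟨by linarith, hya⟩
  have hlow := hf.secant_mono ha h₀ hy (by linarith) hay.ne' (by linarith)
  have hupp := hf.secant_mono ha hy h₂ hay.ne' (by linarith) hya
  rw [show a - 1 - a = -1 by ring, div_neg, div_one, neg_sub, le_div_iff₀ (sub_pos.2 hay)]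
    at hlow
  rw [show a + 1 - a = 1 by ring, div_one, div_le_iff₀ (sub_pos.2 hay)] at hupp
  exact ⟨hlow, hupp⟩

theorem sub_le_div_neg_of_mul_le_of_le_mul {a b c t t' : ℝ} (hab : a ≤ b) (hb : b < 0)
    (ht' : t' ≤ 1) (hat' : a * t' ≤ c) (hbt : c ≤ b * t) : t - t' ≤ (b - a) / -b := by
  rw [le_div_iff₀ (neg_pos.2 hb)]
  nlinarith [mul_le_mul_of_nonneg_left ht' (sub_nonneg.2 hab)]

noncomputable def tailLogSlope (Ftail : ℕ → ℝ) (m : ℕ) : ℝ :=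
  Real.log (Ftail (m + 1)) - Real.log (Ftail m)

theorem tendsto_tailLogSlope {Ftail : ℕ → ℝ} (hpos : ∀ m, 0 < Ftail m) {γ : ℝ} (hγ0 : 0 < γ)
    (hγ : Tendsto (fun m : ℕ => Ftail (m + 1) / Ftail m) atTop (nhds γ)) :
    Tendsto (tailLogSlope Ftail) atTop (nhds (Real.log γ)) :=
  ((Real.continuousAt_log hγ0.ne').tendsto.comp hγ).congr fun _ =>
    Real.log_div (hpos _).ne' (hpos _).ne'

namespace AdmissibleExt

variable {Ftail : ℕ → ℝ}

theorem tail_pos (E : AdmissibleExt Ftail) (m : ℕ) : 0 < Ftail m :=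
  E.agrees m ▸ E.pos m (mem_Ici.2 (Nat.cast_nonneg m))

theorem G_mem_Icc_iff (E : AdmissibleExt Ftail) {y : ℝ} (hy : 0 ≤ y) (m : ℕ) :
    E.G y ∈ Icc (Ftail (m + 1)) (Ftail m) ↔ y ∈ Icc (m : ℝ) (m + 1) := by
  have hm : (m : ℝ) ∈ Ici 0 := mem_Ici.2 (Nat.cast_nonneg m)
  have hm1 : (m : ℝ) + 1 ∈ Ici 0 := by simp only [mem_Ici]; positivity
  rw [← E.agrees, ← E.agrees, Nat.cast_succ, mem_Icc, mem_Icc,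
    E.anti.le_iff_ge hm1 hy, E.anti.le_iff_ge hy hm, and_comm]

theorem tendsto_atTop_of_tendsto_G_s5 (E : AdmissibleExt Ftail) {α : Type*} {l : Filter α}
    {u : α → ℝ} (hu : ∀ᶠ i in l, 0 ≤ u i) (hG : Tendsto (fun i => E.G (u i)) l (nhds 0)) :
    Tendsto u l atTop := by
  refine tendsto_atTop.2 fun b => ?_
  have hb : max b 0 ∈ Ici 0 := le_max_right b 0
  filter_upwards [hu, hG.eventually (gt_mem_nhds (E.pos _ hb))] with i hi hGi
  exact (le_max_left b 0).trans ((E.anti.lt_iff_gt hi hb).1 hGi).le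

theorem tailLogSlope_mul_le (E : AdmissibleExt Ftail) {m : ℕ} (hm : 1 ≤ m) {y : ℝ}
    (hmy : (m : ℝ) ≤ y) (hym : y ≤ m + 1) :
    tailLogSlope Ftail (m - 1) * (y - m) ≤ Real.log (E.G y) - Real.log (Ftail m) ∧
      Real.log (E.G y) - Real.log (Ftail m) ≤ tailLogSlope Ftail m * (y - m) := by
  have hcast : ((m - 1 : ℕ) : ℝ) = m - 1 := Nat.cast_pred hm
  have h := E.logConvex.slope_pred_mul_le_sub_le_slope_mul
    (by rw [← hcast]; exact mem_Ici.2 (Nat.cast_nonneg _)) (by simp only [mem_Ici]; positivity)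
    hmy hym
  simp only [tailLogSlope, Nat.sub_add_cancel hm]
  rwa [← hcast, ← Nat.cast_succ, E.agrees, E.agrees, E.agrees] at h

theorem tailLogSlope_pred_le (E : AdmissibleExt Ftail) {m : ℕ} (hm : 1 ≤ m) :
    tailLogSlope Ftail (m - 1) ≤ tailLogSlope Ftail m := by
  have h := (E.tailLogSlope_mul_le hm (y := m + 1) (by linarith) le_rfl).1
  rwa [← Nat.cast_succ, E.agrees, Nat.cast_succ, add_sub_cancel_left, mul_one] at h

theorem abs_sub_le_of_G_eq (E E' : AdmissibleExt Ftail) {m : ℕ} (hm : 1 ≤ m)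
    (hs : tailLogSlope Ftail m < 0) {y y' : ℝ} (hmy : (m : ℝ) ≤ y) (hym : y ≤ m + 1)
    (hy' : 0 ≤ y') (hG : E.G y = E'.G y') :
    |y - y'| ≤ (tailLogSlope Ftail m - tailLogSlope Ftail (m - 1)) / -tailLogSlope Ftail m := by
  have hy : 0 ≤ y := (Nat.cast_nonneg m).trans hmy
  obtain ⟨hmy', hym'⟩ := (E'.G_mem_Icc_iff hy' m).1 (hG ▸ (E.G_mem_Icc_iff hy m).2 ⟨hmy, hym⟩)
  obtain ⟨hlow, hupp⟩ := E.tailLogSlope_mul_le hm hmy hym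
  obtain ⟨hlow', hupp'⟩ := E'.tailLogSlope_mul_le hm hmy' hym'
  rw [hG] at hlow hupp
  have hmono := E.tailLogSlope_pred_le hm
  rw [abs_sub_le_iff]
  constructor
  · calc y - y' = (y - m) - (y' - m) := by ring
      _ ≤ _ := sub_le_div_neg_of_mul_le_of_le_mul hmono hs (by linarith) hlow' hupp
  · calc y' - y = (y' - m) - (y - m) := by ring
      _ ≤ _ := sub_le_div_neg_of_mul_le_of_le_mul hmono hs (by linarith) hlow hupp'

end AdmissibleExt

theorem sub_solutions_tendsto_zero_of_two_extensions_general
    (Ftail : ℕ → ℝ)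
    (γ : ℝ) (hγ0 : 0 < γ) (hγ1 : γ < 1)
    (hγ : Tendsto (fun t : ℕ => Ftail (t + 1) / Ftail t) atTop (nhds γ))
    (E E' : AdmissibleExt Ftail)
    (x : ℕ → ℝ) (hx0 : ∀ n, 2 ≤ n → 0 ≤ x n)
    (hx : ∀ n, 2 ≤ n → E.G (x n) = 1 / n)
    (x' : ℕ → ℝ) (hx'0 : ∀ n, 2 ≤ n → 0 ≤ x' n)
    (hx' : ∀ n, 2 ≤ n → E'.G (x' n) = 1 / n) :
    Tendsto (fun n => x n - x' n) atTop (nhds 0) := by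
  set s := tailLogSlope Ftail
  have hs : Tendsto s atTop (nhds (Real.log γ)) := tendsto_tailLogSlope E.tail_pos hγ0 hγ
  have hlogγ : Real.log γ < 0 := Real.log_neg hγ0 hγ1
  have hGx : Tendsto (fun n => E.G (x n)) atTop (nhds 0) :=
    tendsto_one_div_atTop_nhds_zero_nat.congr' <|
      (eventually_ge_atTop 2).mono fun n hn => (hx n hn).symm
  have hm : Tendsto (fun n => ⌊x n⌋₊) atTop atTop :=
    tendsto_nat_floor_atTop.comp <|
      E.tendsto_atTop_of_tendsto_G_s5 (eventually_atTop.2 ⟨2, hx0⟩) hGx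
  have hbound : Tendsto (fun n => (s ⌊x n⌋₊ - s (⌊x n⌋₊ - 1)) / -s ⌊x n⌋₊) atTop (nhds 0) := by
    have hsm := hs.comp hm
    have hsm' := hs.comp ((tendsto_sub_atTop_nat 1).comp hm)
    have h := (hsm.sub hsm').div hsm.neg (neg_ne_zero.2 hlogγ.ne)
    rwa [sub_self, zero_div] at h
  refine squeeze_zero_norm' ?_ hbound
  filter_upwards [hm.eventually_ge_atTop 1, hm.eventually (hs.eventually (gt_mem_nhds hlogγ)),
    eventually_ge_atTop 2] with n hm1 hsn hn
  rw [Real.norm_eq_abs]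
  exact E.abs_sub_le_of_G_eq E' hm1 hsn (Nat.floor_le (hx0 n hn)) (Nat.lt_floor_add_one _).le
    (hx'0 n hn) ((hx n hn).trans (hx' n hn).symm)

/-- **Lemma (independence of the extension).** If `ℱ(n+1)/ℱ(n) → γ ∈ (0,1)` and `G`, `G̃`
are two admissible extensions of the tail `ℱ`, with `xₙ`, `x̃ₙ` the unique solutions of
`G(xₙ) = 1/n`, `G̃(x̃ₙ) = 1/n`, then `xₙ − x̃ₙ → 0`. -/
theorem sub_solutions_tendsto_zero_of_two_extensions
    (Ftail : ℕ → ℝ) (hpos : ∀ t : ℕ, 0 < Ftail t) (hle : ∀ t : ℕ, Ftail t ≤ 1)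
    (γ : ℝ) (hγ0 : 0 < γ) (hγ1 : γ < 1)
    (hγ : Tendsto (fun t : ℕ => Ftail (t + 1) / Ftail t) atTop (nhds γ))
    (E E' : AdmissibleExt Ftail)
    (x : ℕ → ℝ) (hx0 : ∀ n, 2 ≤ n → 0 ≤ x n)
    (hx : ∀ n, 2 ≤ n → E.G (x n) = 1 / n)
    (x' : ℕ → ℝ) (hx'0 : ∀ n, 2 ≤ n → 0 ≤ x' n)
    (hx' : ∀ n, 2 ≤ n → E'.G (x' n) = 1 / n) :
    Tendsto (fun n => x n - x' n) atTop (nhds 0) :=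
  sub_solutions_tendsto_zero_of_two_extensions_general Ftail γ hγ0 hγ1 hγ E E' x hx0 hx x' hx'0 hx'
end
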